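/- arXiv:1210.2669 — 2 statements merged into one kernel-verified Lean document; each statement's English description precedes it below -/
import Mathlib

section
/- Suppose E : ℤ → ℝ satisfies E(n) = E(-n), E(0)=0, and min{1,λ}·π·|n| ≤ E(n) ≤ max{1,λ}·π·|n| for all n, where 1/5 < λ < 5. Then for any finite list of nonzero integers n₁,…,n_i with n₁+⋯+n_i = 1 and at least two of the n_j nonzero, one has E(n₁) + ⋯ + E(n_i) > E(1). -/
private lemma even_abs_sub_sum (l : List ℤ) :
    Even ((l.map (fun x => |x|)).sum - l.sum) := by
  induction l with
  | nil => simp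
  | cons a t ih =>
    simp only [List.map_cons, List.sum_cons]
    have h : Even (|a| - a) := by
      rcases abs_choice a with h | h
      · simp [h]
      · rw [h]; exact ⟨-a, by ring⟩
    have := h.add ih
    convert this using 1
    · rfl
    · ring

private lemma abs_sum_ge (l : List ℤ) (h : ∀ x ∈ l, 2 ≤ |x|) :
    2 * (l.length : ℤ) ≤ (l.map (fun x => |x|)).sum := by
  induction l with
  | nil => simp
  | cons a t ih =>
    simp only [List.map_cons, List.sum_cons, List.length_cons]
    have h1 := ih (fun x hx => h x (List.mem_cons_of_mem _ hx))
    have h2 := h a (List.mem_cons_self)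
    push_cast
    omega

private lemma sum_map_const_mul_abs (c : ℝ) (l : List ℤ) :
    (l.map (fun (x : ℤ) => c * (Real.pi * |(x : ℝ)|))).sum
      = c * (Real.pi * ((l.map (fun x => |x|)).sum : ℤ)) := by
  induction l with
  | nil => simp
  | cons a t ih =>
    simp only [List.map_cons, List.sum_cons, ih]
    push_cast
    ring

/-- Verification of the splitting hypothesis for `N = 1`, `1/5 < λ < 5`:
if `E(n) = E(-n)`, `E(0) = 0`, and `min{1,λ}π|n| ≤ E(n) ≤ max{1,λ}π|n|` for all `n`,
then for any finite list of nonzero integers summing to `1`, with at least two entries,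
the sum of their energies strictly exceeds `E(1)`. -/
theorem splitting_hypothesis_N_one (lam : ℝ) (h1 : 1 / 5 < lam) (h2 : lam < 5)
    (E : ℤ → ℝ) (hsymm : ∀ n : ℤ, E (-n) = E n) (h0 : E 0 = 0)
    (hlow : ∀ n : ℤ, min 1 lam * (Real.pi * |(n : ℝ)|) ≤ E n)
    (hhigh : ∀ n : ℤ, E n ≤ max 1 lam * (Real.pi * |(n : ℝ)|))
    (l : List ℤ) (hne : ∀ x ∈ l, x ≠ 0) (hsum : l.sum = 1) (hlen : 2 ≤ l.length) :
    E 1 < (l.map E).sum := by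
  have hπ := Real.pi_pos
  have hminpos : 0 < min 1 lam := lt_min one_pos (by linarith)
  have hEpos : ∀ n : ℤ, n ≠ 0 → 0 < E n := by
    intro n hn
    have hl := hlow n
    have hone : (1 : ℝ) ≤ |(n : ℝ)| := by
      rw [← Int.cast_abs]
      exact_mod_cast Int.one_le_abs hn
    have := mul_pos hminpos (mul_pos hπ (lt_of_lt_of_le one_pos hone))
    linarith
  by_cases hone : ∃ x ∈ l, |x| = 1
  · -- some entry is ±1; its energy is E 1 and the rest are positive
    obtain ⟨x, hx, hx1⟩ := hone
    have hperm : l.Perm (x :: l.erase x) := List.perm_cons_erase hx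
    rw [(hperm.map E).sum_eq]
    simp only [List.map_cons, List.sum_cons]
    have hEx : E x = E 1 := by
      rcases (abs_eq (by norm_num : (0:ℤ) ≤ 1)).mp hx1 with rfl | rfl
      · rfl
      · exact hsymm 1
    have hlenE : (l.erase x).length = l.length - 1 := List.length_erase_of_mem hx
    have hnenil : (l.erase x).map E ≠ [] := by
      intro h
      have := congrArg List.length h
      simp [hlenE] at this
      omega
    have hpos : 0 < ((l.erase x).map E).sum := by
      apply List.sum_pos _ _ hnenil
      intro y hy
      obtain ⟨z, hz, rfl⟩ := List.mem_map.mp hy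
      exact hEpos z (hne z (List.mem_of_mem_erase hz))
    linarith [hEx.ge]
  · -- all entries have |x| ≥ 2, so the total absolute sum is ≥ 5
    push_neg at hone
    have habs2 : ∀ x ∈ l, 2 ≤ |x| := by
      intro x hx
      have h' : |x| ≠ 0 := abs_ne_zero.mpr (hne x hx)
      have h'' := hone x hx
      have h3 := abs_nonneg x
      omega
    set S : ℤ := (l.map (fun x => |x|)).sum with hS
    have hS5 : 5 ≤ S := by
      obtain ⟨k, hk⟩ := even_abs_sub_sum l
      have h2' := abs_sum_ge l habs2
      rw [hsum] at hk
      rw [← hS] at hk h2'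
      omega
    have hlb : min 1 lam * (Real.pi * (S : ℝ)) ≤ (l.map E).sum := by
      have hle : ((l.map (fun (x : ℤ) => min 1 lam * (Real.pi * |(x : ℝ)|))).sum
          ≤ (l.map E).sum) := List.sum_le_sum (fun x _ => hlow x)
      rw [sum_map_const_mul_abs] at hle
      exact hle
    have hmax5 : max 1 lam < 5 * min 1 lam := by
      rcases le_total 1 lam with h | h
      · rw [max_eq_right h, min_eq_left h]; linarith
      · rw [max_eq_left h, min_eq_right h]; linarith
    have hE1 : E 1 ≤ max 1 lam * Real.pi := by
      have := hhigh 1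
      simpa using this
    have hS5' : (5 : ℝ) ≤ (S : ℝ) := by exact_mod_cast hS5
    nlinarith [mul_pos hminpos hπ]
end

section
/- Energy of the radial interpolation: with ρ, q : ℝ/2πℤ → ℝ smooth, 1/2 ≤ ρ ≤ 3/2, A_θ : ℝ/2πℤ → ℝ smooth, define on the annulus s ≤ r ≤ s+ε (with 0 < ε ≤ s) the configuration φ̃(r,θ) = ρ̃(r,θ)e^{iq(θ)} with ρ̃ = ρ + ((r-s)/ε)(1-ρ), and Ã = [A_θ + ((r-s)/ε)(q' - A_θ)]dθ. Then there is a constant C(λ) such that pointwise for s ≤ r ≤ s+ε, e^ν_{ε,λ}(φ̃, Ã)(r,θ) ≤ C(λ) · [ (1/(2s²))ρ'(θ)² + ρ(θ)²(q'(θ) - A_θ(θ))²/s² + (λ/(8ε²))(1-ρ(θ)²)² ], using |Dφ̃|² ≤ (1/r²)ρ'(θ)² + (1-ρ(θ))²/ε² + C(q'(θ)-A_θ(θ))²/r², ε²|dÃ|² = (1/r²)(q'-A_θ)², and (ρ̃²-1)² ≤ (ρ²-1)². -/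
set_option maxHeartbeats 800000

private lemma radial_interpolation_energy_aux (lam a d b s ε r t : ℝ)
    (hlam : 0 < lam) (ha1 : 1 / 2 ≤ a) (ha2 : a ≤ 3 / 2)
    (hε : 0 < ε) (hs : 0 < s) (hr1 : s ≤ r) (ht0 : 0 ≤ t) (ht1 : t ≤ 1) :
    (1 / 2) * (((1 - a) / ε) ^ 2
        + (1 / r ^ 2) * ((1 - t) * d) ^ 2
        + (a + t * (1 - a)) ^ 2 * (1 / r ^ 2) * ((1 - t) * b) ^ 2)
      + (1 / (2 * r ^ 2)) * b ^ 2
      + lam / (8 * ε ^ 2) * ((a + t * (1 - a)) ^ 2 - 1) ^ 2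
    ≤ (11 + 2 / lam) * ((1 / (2 * s ^ 2)) * d ^ 2
        + a ^ 2 * b ^ 2 / s ^ 2
        + lam / (8 * ε ^ 2) * (1 - a ^ 2) ^ 2) := by
  have hr0 : 0 < r := lt_of_lt_of_le hs hr1
  have h2t : (0 : ℝ) ≤ 2 - t := by linarith
  have he1 : 1 / 2 ≤ a + t * (1 - a) := by nlinarith
  have he2 : a + t * (1 - a) ≤ 3 / 2 := by nlinarith
  have hsr : 1 / r ^ 2 ≤ 1 / s ^ 2 := by
    apply one_div_le_one_div_of_le (by positivity)
    exact pow_le_pow_left₀ hs.le hr1 2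
  -- Term 1 : radial derivative of ρ̃
  have hB1 : ((1 - a) / ε) ^ 2 ≤ 2 * (2 / lam * (lam / (8 * ε ^ 2) * (1 - a ^ 2) ^ 2)) := by
    have hrw : 2 * (2 / lam * (lam / (8 * ε ^ 2) * (1 - a ^ 2) ^ 2))
        = (1 - a ^ 2) ^ 2 / (2 * ε ^ 2) := by
      field_simp; ring
    rw [hrw, div_pow, div_le_div_iff₀ (by positivity) (by positivity)]
    nlinarith [sq_nonneg (1 - a), sq_nonneg ε, mul_nonneg (sq_nonneg (1 - a)) (sq_nonneg ε)]
  -- Term 2 : angular derivative of ρ̃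
  have hd2 : ((1 - t) * d) ^ 2 ≤ d ^ 2 := by
    nlinarith [mul_nonneg (mul_nonneg ht0 h2t) (sq_nonneg d)]
  have hB2 : (1 / r ^ 2) * ((1 - t) * d) ^ 2 ≤ (1 / s ^ 2) * d ^ 2 :=
    mul_le_mul hsr hd2 (sq_nonneg _) (by positivity)
  -- Term 3 : covariant angular derivative
  have he9 : (a + t * (1 - a)) ^ 2 ≤ 9 * a ^ 2 := by nlinarith
  have hb2 : ((1 - t) * b) ^ 2 ≤ b ^ 2 := by
    nlinarith [mul_nonneg (mul_nonneg ht0 h2t) (sq_nonneg b)]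
  have hB3 : (a + t * (1 - a)) ^ 2 * (1 / r ^ 2) * ((1 - t) * b) ^ 2
      ≤ 9 * a ^ 2 * (1 / s ^ 2) * b ^ 2 := by
    have h1 : (a + t * (1 - a)) ^ 2 * (1 / r ^ 2) ≤ 9 * a ^ 2 * (1 / s ^ 2) :=
      mul_le_mul he9 hsr (by positivity) (by positivity)
    exact mul_le_mul h1 hb2 (sq_nonneg _) (by positivity)
  -- Term 4 : curvature term
  have hB4 : (1 / (2 * r ^ 2)) * b ^ 2 ≤ 2 * (a ^ 2 * b ^ 2 / s ^ 2) := by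
    have hsq : s ^ 2 ≤ r ^ 2 := pow_le_pow_left₀ hs.le hr1 2
    have h1 : 1 / (2 * r ^ 2) ≤ 1 / (2 * s ^ 2) :=
      one_div_le_one_div_of_le (by positivity) (by linarith)
    have h2 : 1 / (2 * s ^ 2) ≤ 2 * a ^ 2 / s ^ 2 := by
      rw [div_le_div_iff₀ (by positivity) (by positivity)]
      nlinarith [mul_nonneg (mul_nonneg (by linarith : (0:ℝ) ≤ 2*a-1)
        (by linarith : (0:ℝ) ≤ 2*a+1)) (sq_nonneg s)]
    calc (1 / (2 * r ^ 2)) * b ^ 2 ≤ (2 * a ^ 2 / s ^ 2) * b ^ 2 :=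
          mul_le_mul_of_nonneg_right (h1.trans h2) (sq_nonneg b)
      _ = 2 * (a ^ 2 * b ^ 2 / s ^ 2) := by ring
  -- Term 5 : potential term
  have hB5 : ((a + t * (1 - a)) ^ 2 - 1) ^ 2 ≤ 3 * (1 - a ^ 2) ^ 2 := by
    have hediff : ((a + t * (1 - a)) - 1) ^ 2 ≤ (a - 1) ^ 2 := by
      have h : (a + t * (1 - a)) - 1 = (1 - t) * (a - 1) := by ring
      rw [h]
      nlinarith [mul_nonneg (mul_nonneg ht0 h2t) (sq_nonneg (a - 1))]
    have h51 : ((a + t * (1 - a)) + 1) ^ 2 ≤ 25 / 4 := by nlinarith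
    have h52 : (9 : ℝ) / 4 ≤ (a + 1) ^ 2 := by nlinarith
    nlinarith [mul_le_mul hediff h51 (sq_nonneg _) (sq_nonneg _),
      mul_le_mul_of_nonneg_left h52 (sq_nonneg (a - 1))]
  have hpot : lam / (8 * ε ^ 2) * ((a + t * (1 - a)) ^ 2 - 1) ^ 2
      ≤ 3 * (lam / (8 * ε ^ 2) * (1 - a ^ 2) ^ 2) := by
    have hε2 : (0 : ℝ) ≤ lam / (8 * ε ^ 2) := by positivity
    calc lam / (8 * ε ^ 2) * ((a + t * (1 - a)) ^ 2 - 1) ^ 2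
        ≤ lam / (8 * ε ^ 2) * (3 * (1 - a ^ 2) ^ 2) :=
          mul_le_mul_of_nonneg_left hB5 hε2
      _ = 3 * (lam / (8 * ε ^ 2) * (1 - a ^ 2) ^ 2) := by ring
  -- assemble
  have hT1 : 0 ≤ (1 / (2 * s ^ 2)) * d ^ 2 := by positivity
  have hT2 : 0 ≤ a ^ 2 * b ^ 2 / s ^ 2 := by positivity
  have hT3 : 0 ≤ lam / (8 * ε ^ 2) * (1 - a ^ 2) ^ 2 := by positivity
  have hilam : (0 : ℝ) ≤ 2 / lam := by positivity
  have e2 : 1 / s ^ 2 * d ^ 2 = 2 * (1 / (2 * s ^ 2) * d ^ 2) := by ring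
  have e3 : 9 * a ^ 2 * (1 / s ^ 2) * b ^ 2 = 9 * (a ^ 2 * b ^ 2 / s ^ 2) := by ring
  linarith [e2, e3, mul_nonneg hilam hT1, mul_nonneg hilam hT2, mul_nonneg hilam hT3,
    mul_le_mul_of_nonneg_left hB1 (by norm_num : (0:ℝ) ≤ 1/2),
    mul_le_mul_of_nonneg_left hB2 (by norm_num : (0:ℝ) ≤ 1/2),
    mul_le_mul_of_nonneg_left hB3 (by norm_num : (0:ℝ) ≤ 1/2), hB4, hpot, hT1, hT2, hT3]

/-- **Energy of the radial interpolation**: with `ρ, q, A_θ` smooth, `1/2 ≤ ρ ≤ 3/2`,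
`0 < ε ≤ s`, the configuration `φ̃ = ρ̃ e^{iq}`, `Ã = [A_θ + t(q'-A_θ)]dθ`
(`t = (r-s)/ε`, `ρ̃ = ρ + t(1-ρ)`) has energy density in polar coordinates
`e^ν_{ε,λ}(φ̃,Ã)(r,θ) = (1/2)[(∂_r ρ̃)² + (1/r²)(∂_θ ρ̃)² + ρ̃²(1/r²)(q'-Ã_θ)²]
  + (ε²/2)|dÃ|² + (λ/(8ε²))(ρ̃²-1)²`
bounded for `s ≤ r ≤ s+ε` by
`C(λ)[(1/(2s²))ρ'(θ)² + ρ(θ)²(q'(θ)-A_θ(θ))²/s² + (λ/(8ε²))(1-ρ(θ)²)²]`. -/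
theorem radial_interpolation_energy (lam : ℝ) (hlam : 0 < lam) :
    ∃ C > (0 : ℝ), ∀ (ρ q Aθ : ℝ → ℝ) (s ε : ℝ),
      ContDiff ℝ (⊤ : ℕ∞) ρ → ContDiff ℝ (⊤ : ℕ∞) q → ContDiff ℝ (⊤ : ℕ∞) Aθ →
      (∀ θ, (1 : ℝ) / 2 ≤ ρ θ ∧ ρ θ ≤ 3 / 2) →
      0 < ε → ε ≤ s →
      ∀ r ∈ Set.Icc s (s + ε), ∀ θ : ℝ,
        (1 / 2) * (((1 - ρ θ) / ε) ^ 2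
            + (1 / r ^ 2) * ((1 - (r - s) / ε) * deriv ρ θ) ^ 2
            + (ρ θ + ((r - s) / ε) * (1 - ρ θ)) ^ 2 * (1 / r ^ 2)
              * ((1 - (r - s) / ε) * (deriv q θ - Aθ θ)) ^ 2)
          + (1 / (2 * r ^ 2)) * (deriv q θ - Aθ θ) ^ 2
          + lam / (8 * ε ^ 2) * ((ρ θ + ((r - s) / ε) * (1 - ρ θ)) ^ 2 - 1) ^ 2
        ≤ C * ((1 / (2 * s ^ 2)) * (deriv ρ θ) ^ 2
            + (ρ θ) ^ 2 * (deriv q θ - Aθ θ) ^ 2 / s ^ 2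
            + lam / (8 * ε ^ 2) * (1 - (ρ θ) ^ 2) ^ 2) := by
  refine ⟨11 + 2 / lam, by positivity, ?_⟩
  intro ρ q Aθ s ε hρ hq hA hbound hε hεs r hr θ
  obtain ⟨hr1, hr2⟩ := hr
  obtain ⟨ha1, ha2⟩ := hbound θ
  have hs : 0 < s := lt_of_lt_of_le hε hεs
  exact radial_interpolation_energy_aux lam (ρ θ) (deriv ρ θ) (deriv q θ - Aθ θ) s ε r
    ((r - s) / ε) hlam ha1 ha2 hε hs hr1
    (div_nonneg (by linarith) hε.le) ((div_le_one hε).mpr (by linarith))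
end
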